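/- Let (X, π) be a weighted n-partite simplicial complex and let s = (s(1),…,s(n)) be any ordering of [n]. Then the entropy contraction factor of the sequential sweep satisfies EC(Psq^{(s)}) ≥ ∏_{j=1}^{n−1} η^{s([j+1,n])→s(j)}, where s(A) = {s(a) : a ∈ A}. In particular, for every probability distribution μ on the top faces, D(μ·Psq^{(s)} ‖ π) ≤ (1 − ∏_{j=1}^{n−1} η^{s([j+1,n])→s(j)}) · D(μ ‖ π). -/

import Mathlib

open Finset
open scoped Classical

noncomputable section

namespace PaperFormal

/-- A weighted `n`-partite simplicial complex: a nonempty finite set `Ω` of `n`-tuples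
(the top faces, each tuple picking one element from each side `U i`) together with a
full-support probability distribution `π` on it. -/
structure WPC (n : ℕ) (U : Fin n → Type*) [∀ i, Fintype (U i)] [∀ i, DecidableEq (U i)] where
  Ω : Finset (∀ i, U i)
  nonempty : Ω.Nonempty
  π : (∀ i, U i) → ℝ
  nonneg : ∀ ω, 0 ≤ π ω
  support : ∀ ω, 0 < π ω ↔ ω ∈ Ω
  sum_one : ∑ ω : ∀ i, U i, π ω = 1

/-- Partial assignments to the coordinates in `S`. -/
abbrev PAssign {n : ℕ} (U : Fin n → Type*) (S : Finset (Fin n)) : Type _ :=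
  ∀ i : {x : Fin n // x ∈ S}, U i.1

variable {n : ℕ} {U : Fin n → Type*} [∀ i, Fintype (U i)] [∀ i, DecidableEq (U i)]

/-- Restriction of a tuple to the coordinates in `S`. -/
def restr (S : Finset (Fin n)) (ω : ∀ i, U i) : PAssign U S := fun i => ω i.1

/-- The unique assignment to the empty set of coordinates. -/
def emptyA : PAssign U (∅ : Finset (Fin n)) := fun i => absurd i.2 (Finset.notMem_empty i.1)

/-- Probability of the event `E` under `π`. -/
def pr (X : WPC n U) (E : (∀ i, U i) → Prop) : ℝ :=
  ∑ ω : ∀ i, U i, if E ω then X.π ω else 0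

lemma pr_congr (X : WPC n U) {E F : (∀ i, U i) → Prop} (h : ∀ ω, E ω ↔ F ω) :
    pr X E = pr X F :=
  Finset.sum_congr rfl fun ω _ => if_congr (h ω) rfl rfl

/-- The `S`-marginal of `π`, evaluated at the partial assignment `α`. -/
def marg (X : WPC n U) (S : Finset (Fin n)) (α : PAssign U S) : ℝ :=
  pr X fun ω => restr S ω = α

/-- The pinned marginal `π_T^{(α)}`: the probability that the coordinates in `T` agree
with `β`, conditioned on the coordinates in `S` agreeing with `α`. -/
def cmarg (X : WPC n U) {S T : Finset (Fin n)} (α : PAssign U S) (β : PAssign U T) : ℝ :=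
  pr X (fun ω => restr S ω = α ∧ restr T ω = β) / marg X S α

/-- The colored random walk `C_α^{I → J}`: entry `(τI, τJ)` is
`Pr[ω_J = τJ | ω_I = τI, ω_S = α]`. -/
def Cwalk (X : WPC n U) (S I J : Finset (Fin n)) (α : PAssign U S)
    (τI : PAssign U I) (τJ : PAssign U J) : ℝ :=
  pr X (fun ω => restr S ω = α ∧ restr I ω = τI ∧ restr J ω = τJ) /
    pr X (fun ω => restr S ω = α ∧ restr I ω = τI)

/-- The second largest singular value of a row-stochastic matrix `M` satisfying
`μA M = μB`, with respect to the inner products weighted by `μA` and `μB`, via its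
variational characterization
`σ₂(M) = sup { ⟨f, M g⟩_{μA} : ⟨f,1⟩_{μA} = ⟨g,1⟩_{μB} = 0, ‖f‖_{μA} = ‖g‖_{μB} = 1 }`. -/
def sigma2 {A B : Type*} [Fintype A] [Fintype B]
    (μA : A → ℝ) (μB : B → ℝ) (M : A → B → ℝ) : ℝ :=
  sSup { r : ℝ | ∃ f : A → ℝ, ∃ g : B → ℝ,
    (∑ a, μA a * f a) = 0 ∧ (∑ b, μB b * g b) = 0 ∧
    (∑ a, μA a * f a ^ 2) = 1 ∧ (∑ b, μB b * g b ^ 2) = 1 ∧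
    r = ∑ a, μA a * f a * ∑ b, M a b * g b }

/-- The second largest singular value `σ₂(C_α^{I → J})`, with respect to the inner
products weighted by the pinned marginals `π_I^{(α)}` and `π_J^{(α)}`. -/
def sigma2C (X : WPC n U) (S I J : Finset (Fin n)) (α : PAssign U S) : ℝ :=
  sigma2 (fun τI : PAssign U I => cmarg X α τI) (fun τJ : PAssign U J => cmarg X α τJ)
    (Cwalk X S I J α)

/-- `ε^{I → J}`: the maximum of `σ₂(C_α^{I → J})` over all partial assignments `α`
to the coordinates outside `I ∪ J` (realizable on `Ω`). -/
def epsIJ (X : WPC n U) (I J : Finset (Fin n)) : ℝ :=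
  sSup { r : ℝ | ∃ α : PAssign U (I ∪ J)ᶜ,
    0 < marg X (I ∪ J)ᶜ α ∧ r = sigma2C X (I ∪ J)ᶜ I J α }

/-- `π` is `(ε 0, …, ε (n-2))`-product: for every realizable pinning `α` of a set `S` of at
most `n - 2` coordinates, and all distinct `i, j ∉ S`, `σ₂(C_α^{i → j}) ≤ ε |S|`. -/
def isProduct (X : WPC n U) (ε : ℕ → ℝ) : Prop :=
  ∀ S : Finset (Fin n), S.card ≤ n - 2 → ∀ α : PAssign U S, 0 < marg X S α →
    ∀ i j : Fin n, i ∉ S → j ∉ S → i ≠ j → sigma2C X S {i} {j} α ≤ ε S.card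

/-- The update operator `Q_i`: resample the `i`-th coordinate according to `π`,
conditionally on all the other coordinates. -/
def Qmat (X : WPC n U) (i : Fin n) : Matrix (∀ i, U i) (∀ i, U i) ℝ :=
  Matrix.of fun ω ω' =>
    pr X (fun τ => τ = ω' ∧ restr {i}ᶜ τ = restr {i}ᶜ ω) /
      pr X (fun τ => restr {i}ᶜ τ = restr {i}ᶜ ω)

/-- The sequential sweep `P_seq^{(s)} = Q_{s 0} Q_{s 1} ⋯ Q_{s (n-1)}`. -/
def Psq (X : WPC n U) (s : Equiv.Perm (Fin n)) : Matrix (∀ i, U i) (∀ i, U i) ℝ :=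
  (List.ofFn fun j : Fin n => Qmat X (s j)).prod

/-- The second largest singular value of the sequential sweep, with respect to the
inner product weighted by its stationary distribution `π`. -/
def sigma2P (X : WPC n U) (s : Equiv.Perm (Fin n)) : ℝ :=
  sigma2 X.π X.π fun ω ω' => Psq X s ω ω'

/-- The link graph `G_α` of a pinning `α` of the coordinates in `S`: vertices are pairs
`(i, x)` with `i ∉ S`, and `(i,x)`, `(j,y)` are adjacent when `i ≠ j` and the event
`{ω_i = x, ω_j = y, ω_S = α}` has positive probability. -/
def linkGraph (X : WPC n U) (S : Finset (Fin n)) (α : PAssign U S) :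
    SimpleGraph ((i : Fin n) × U i) where
  Adj v w := v.1 ≠ w.1 ∧ v.1 ∉ S ∧ w.1 ∉ S ∧
    0 < pr X fun ω => restr S ω = α ∧ ω v.1 = v.2 ∧ ω w.1 = w.2
  symm := by
    constructor
    rintro v w ⟨h1, h2, h3, h4⟩
    refine ⟨h1.symm, h3, h2, ?_⟩
    have e : pr X (fun ω => restr S ω = α ∧ ω w.1 = w.2 ∧ ω v.1 = v.2)
        = pr X (fun ω => restr S ω = α ∧ ω v.1 = v.2 ∧ ω w.1 = w.2) :=
      pr_congr X fun ω => by tauto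
    rw [e]; exact h4
  loopless := by constructor; rintro v ⟨h1, -⟩; exact h1 rfl

/-- `(X, π)` is link-connected: in every link graph (of a realizable pinning of at most
`n - 2` coordinates), every two valid vertices are connected by a path. -/
def linkConnected (X : WPC n U) : Prop :=
  ∀ S : Finset (Fin n), S.card ≤ n - 2 → ∀ α : PAssign U S, 0 < marg X S α →
    ∀ v w : (i : Fin n) × U i, v.1 ∉ S → w.1 ∉ S →
      0 < pr X (fun ω => restr S ω = α ∧ ω v.1 = v.2) →
      0 < pr X (fun ω => restr S ω = α ∧ ω w.1 = w.2) →
      (linkGraph X S α).Reachable v w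

/-- The stationary measure of the random walk on the link graph `G_α`. -/
def linkMeas (X : WPC n U) (S : Finset (Fin n)) (α : PAssign U S) :
    (i : Fin n) × U i → ℝ :=
  fun v => if v.1 ∈ S then 0 else
    (1 / ((n : ℝ) - (S.card : ℝ))) *
      (pr X (fun ω => restr S ω = α ∧ ω v.1 = v.2) / marg X S α)

/-- The random walk matrix `M_α` of the link graph `G_α`. -/
def linkWalk (X : WPC n U) (S : Finset (Fin n)) (α : PAssign U S) :
    (i : Fin n) × U i → (i : Fin n) × U i → ℝ :=
  fun v w =>
    if v.1 = w.1 ∨ v.1 ∈ S ∨ w.1 ∈ S then 0 else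
      (1 / ((n : ℝ) - (S.card : ℝ) - 1)) *
        (pr X (fun ω => restr S ω = α ∧ ω v.1 = v.2 ∧ ω w.1 = w.2) /
          pr X (fun ω => restr S ω = α ∧ ω v.1 = v.2))

/-- The second largest eigenvalue of a random walk matrix `M`, self-adjoint with respect
to the probability measure `μ`, via its variational characterization. -/
def lambda2 {A : Type*} [Fintype A] (μ : A → ℝ) (M : A → A → ℝ) : ℝ :=
  sSup { r : ℝ | ∃ f : A → ℝ,
    (∑ a, μ a * f a) = 0 ∧ (∑ a, μ a * f a ^ 2) = 1 ∧
    r = ∑ a, μ a * f a * ∑ b, M a b * f b }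

/-- `(X, π)` is a `(γ 0, …, γ (n-2))`-local spectral expander:
`λ₂(M_α) ≤ γ |S|` for every realizable pinning `α` of at most `n - 2` coordinates. -/
def isLocalExpander (X : WPC n U) (γ : ℕ → ℝ) : Prop :=
  ∀ S : Finset (Fin n), S.card ≤ n - 2 → ∀ α : PAssign U S, 0 < marg X S α →
    lambda2 (linkMeas X S α) (linkWalk X S α) ≤ γ S.card

/-- Kullback–Leibler divergence `D(μ ‖ ν) = Σ_a μ(a) log (μ(a) / ν(a))`. -/
def KL {A : Type*} [Fintype A] (μ ν : A → ℝ) : ℝ :=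
  ∑ a, μ a * Real.log (μ a / ν a)

/-- `μ` is a probability distribution supported on `{a | P a}`. -/
def distOn {A : Type*} [Fintype A] (P : A → Prop) (μ : A → ℝ) : Prop :=
  (∀ a, 0 ≤ μ a) ∧ (∑ a, μ a) = 1 ∧ ∀ a, ¬ P a → μ a = 0

/-- The `(I, J)` entropy contraction parameter `η^{I → J} = 1 - κ^{I → J}`, where
`κ^{I → J}` is the supremum of `D(μ C_α^{I→J} ‖ π_J^{(α)}) / D(μ ‖ π_I^{(α)})` over all
realizable pinnings `α` of the coordinates outside `I ∪ J` and all distributions `μ` on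
the assignments of `I` compatible with `α`. -/
def etaIJ (X : WPC n U) (I J : Finset (Fin n)) : ℝ :=
  1 - sSup { r : ℝ | ∃ α : PAssign U (I ∪ J)ᶜ, 0 < marg X (I ∪ J)ᶜ α ∧
    ∃ μ : PAssign U I → ℝ,
      distOn (fun τ => 0 < pr X fun ω => restr (I ∪ J)ᶜ ω = α ∧ restr I ω = τ) μ ∧
      KL μ (fun τ : PAssign U I => cmarg X α τ) ≠ 0 ∧
      r = KL (fun τJ : PAssign U J => ∑ τI : PAssign U I, μ τI * Cwalk X (I ∪ J)ᶜ I J α τI τJ)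
            (fun τJ : PAssign U J => cmarg X α τJ) /
          KL μ (fun τ : PAssign U I => cmarg X α τ) }

/-- The entropy contraction factor `EC(M) = 1 - sup_μ D(μ M ‖ π) / D(μ ‖ π)` of a random
walk matrix `M` with stationary distribution `π`. -/
def EC (X : WPC n U) (M : Matrix (∀ i, U i) (∀ i, U i) ℝ) : ℝ :=
  1 - sSup { r : ℝ | ∃ μ : (∀ i, U i) → ℝ, distOn (fun ω => ω ∈ X.Ω) μ ∧
    KL μ X.π ≠ 0 ∧ r = KL (Matrix.vecMul μ M) X.π / KL μ X.π }

/-- The `π`-weighted inner product on `ℝ^Ω`. -/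
def ip (X : WPC n U) (f g : {ω // ω ∈ X.Ω} → ℝ) : ℝ :=
  ∑ ω : {ω // ω ∈ X.Ω}, X.π ω.1 * f ω * g ω

/-- The indicator vector `u_α ∈ ℝ^Ω` of the partial assignment `α` to the coordinates
outside `T`. -/
def uvec (X : WPC n U) (T : Finset (Fin n)) (α : PAssign U Tᶜ) : {ω // ω ∈ X.Ω} → ℝ :=
  fun ω => if restr Tᶜ ω.1 = α then 1 else 0

/-- The subspace `U_T = span { u_α : α an assignment to the coordinates outside T }`. -/
def Uspan (X : WPC n U) (T : Finset (Fin n)) : Submodule ℝ ({ω // ω ∈ X.Ω} → ℝ) :=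
  Submodule.span ℝ { f | ∃ α : PAssign U Tᶜ, f = uvec X T α }

/-- The subspace of functions on `Ω` depending only on the coordinates outside `T`. -/
def Uinv (X : WPC n U) (T : Finset (Fin n)) : Submodule ℝ ({ω // ω ∈ X.Ω} → ℝ) where
  carrier := { f | ∀ ω ω' : {ω // ω ∈ X.Ω}, restr Tᶜ ω.1 = restr Tᶜ ω'.1 → f ω = f ω' }
  add_mem' := by
    intro f g hf hg ω ω' h
    simp only [Pi.add_apply, hf ω ω' h, hg ω ω' h]
  zero_mem' := by intro ω ω' h; rfl
  smul_mem' := by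
    intro c f hf ω ω' h
    simp only [Pi.smul_apply, hf ω ω' h]

/-- The orthogonal complement (with respect to `⟨·,·⟩_π`) of a subspace, as a set. -/
def orthC (X : WPC n U) (W : Submodule ℝ ({ω // ω ∈ X.Ω} → ℝ)) :
    Set ({ω // ω ∈ X.Ω} → ℝ) :=
  { f | ∀ g ∈ W, ip X f g = 0 }

/-- The cosine of the angle between two subspaces of `ℝ^Ω`:
`cos(A,B) = sup { ⟨u,v⟩_π : u ∈ A ∩ (A ⊓ B)ᗮ, v ∈ B ∩ (A ⊓ B)ᗮ, ‖u‖_π = ‖v‖_π = 1 }`. -/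
def cosAngle (X : WPC n U) (A B : Submodule ℝ ({ω // ω ∈ X.Ω} → ℝ)) : ℝ :=
  sSup { r : ℝ | ∃ u, u ∈ A ∧ u ∈ orthC X (A ⊓ B) ∧
    ∃ v, v ∈ B ∧ v ∈ orthC X (A ⊓ B) ∧
    ip X u u = 1 ∧ ip X v v = 1 ∧ r = ip X u v }

/-- The update operator `Q_i` as an operator on `ℝ^Ω`. -/
def Qop (X : WPC n U) (i : Fin n) (f : {ω // ω ∈ X.Ω} → ℝ) : {ω // ω ∈ X.Ω} → ℝ :=
  fun ω => ∑ ω' : {ω // ω ∈ X.Ω}, Qmat X i ω.1 ω'.1 * f ω'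

/-- Concatenation of partial assignments on disjoint coordinate sets. -/
def joinAssign {S T : Finset (Fin n)} (β : PAssign U S) (α : PAssign U T) :
    PAssign U (S ∪ T) :=
  fun i => if h : i.1 ∈ S then β ⟨i.1, h⟩
    else α ⟨i.1, (Finset.mem_union.mp i.2).resolve_left h⟩

/-- The `S`-marginal of a (not necessarily normalized) distribution `ν` on tuples. -/
def distMarg (ν : (∀ i, U i) → ℝ) (S : Finset (Fin n)) (a : PAssign U S) : ℝ :=
  ∑ ω : ∀ i, U i, if restr S ω = a then ν ω else 0

/-- The distribution `ν` conditioned on the `i`-th coordinate being `x`. -/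
def condAt (ν : (∀ i, U i) → ℝ) (i : Fin n) (x : U i) : (∀ i, U i) → ℝ :=
  fun ω => if ω i = x then ν ω / (∑ ω' : ∀ i, U i, if ω' i = x then ν ω' else 0) else 0

/-- The influence matrix `Inf_α` of the pinning `α` of the coordinates in `S`:
`Inf_α((i,x),(j,y)) = Pr[ω_j = y | ω_i = x, ω_S = α] - Pr[ω_j = y | ω_S = α]`
for `i ≠ j` outside `S`, and `0` otherwise. -/
def InfMat (X : WPC n U) (S : Finset (Fin n)) (α : PAssign U S) :
    Matrix ((i : Fin n) × U i) ((i : Fin n) × U i) ℝ :=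
  Matrix.of fun v w =>
    if v.1 = w.1 ∨ v.1 ∈ S ∨ w.1 ∈ S then 0 else
      pr X (fun ω => restr S ω = α ∧ ω v.1 = v.2 ∧ ω w.1 = w.2) /
          pr X (fun ω => restr S ω = α ∧ ω v.1 = v.2) -
        pr X (fun ω => restr S ω = α ∧ ω w.1 = w.2) / marg X S α

/-- `π` is `(c 0, …, c (n-2))`-spectrally independent: every (real) eigenvalue of the
influence matrix of a realizable pinning of at most `n - 2` coordinates is at most
`c |S|`. -/
def spectrallyIndependent (X : WPC n U) (c : ℕ → ℝ) : Prop :=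
  ∀ S : Finset (Fin n), S.card ≤ n - 2 → ∀ α : PAssign U S, 0 < marg X S α →
    ∀ r : ℝ,
      (∃ v : ((i : Fin n) × U i) → ℝ, v ≠ 0 ∧ (InfMat X S α).mulVec v = r • v) →
      r ≤ c S.card

end PaperFormal

/-!
Let `μⱼ` be the distribution after the first `j` updates and `Pⱼ` the set of coordinates
updated so far. The update of `i = s j` keeps the law of `μⱼ` off `i` and redraws `ω_i` from
`π` given the rest; hence `D(μⱼ₊₁ ‖ π)` is the divergence of the marginals of `μⱼ` on
`Pⱼ ∪ Fⱼ`, `Fⱼ` the coordinates still pending, and given `ω_{Pⱼ} = α` the new law of `ω_i` is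
the old law of `ω_{Fⱼ}` pushed through `C_α^{Fⱼ → i}`. By the chain rule on both sides, the
divergence `aⱼ` of the marginals on `Pⱼ` satisfies
`aⱼ₊₁ ≤ ηⱼ aⱼ + (1 - ηⱼ) D(μⱼ₊₁ ‖ π) ≤ ηⱼ aⱼ + (1 - ηⱼ) D(μ ‖ π)`, with `a₀ = 0`.
The last update redraws the only coordinate outside `Pₙ₋₁`, so `D(μ Psq ‖ π) = aₙ₋₁`.
-/

namespace PaperFormal

section KL

variable {A B : Type*} [Fintype A] [Fintype B] {μ ν : A → ℝ}

theorem sum_sub_sum_le_KL (hμ : ∀ a, 0 ≤ μ a) (hν : ∀ a, 0 ≤ ν a)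
    (hμν : ∀ a, ν a = 0 → μ a = 0) : ∑ a, μ a - ∑ a, ν a ≤ KL μ ν := by
  rw [KL, ← Finset.sum_sub_distrib]
  refine Finset.sum_le_sum fun a _ => ?_
  rcases (hν a).eq_or_lt with h0 | hpos
  · simp [hμν a h0.symm, ← h0]
  · have h := mul_le_mul_of_nonneg_left
      (Real.self_sub_one_le_mul_log (div_nonneg (hμ a) hpos.le)) hpos.le
    rwa [mul_sub, mul_div_cancel₀ _ hpos.ne', mul_one, ← mul_assoc,
      mul_div_cancel₀ _ hpos.ne'] at h

theorem KL_nonneg (hμ : ∀ a, 0 ≤ μ a) (hν : ∀ a, 0 ≤ ν a)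
    (hμν : ∀ a, ν a = 0 → μ a = 0) (hsum : ∑ a, ν a ≤ ∑ a, μ a) : 0 ≤ KL μ ν :=
  (sub_nonneg.mpr hsum).trans (sum_sub_sum_le_KL hμ hν hμν)

theorem KL_const_mul_right (hμν : ∀ a, ν a = 0 → μ a = 0) {c : ℝ} (hc : c ≠ 0) :
    KL μ (fun a => c * ν a) = KL μ ν - (∑ a, μ a) * Real.log c := by
  rw [KL, KL, Finset.sum_mul, ← Finset.sum_sub_distrib]
  refine Finset.sum_congr rfl fun a _ => ?_
  by_cases h0 : μ a = 0
  · simp [h0]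
  · have hνa : ν a ≠ 0 := fun h => h0 (hμν a h)
    rw [mul_comm c, ← div_div, Real.log_div (div_ne_zero h0 hνa) hc, mul_sub]

/-- The log-sum inequality: Gibbs' inequality against `ν` rescaled to the total mass of `μ`. -/
theorem sum_mul_log_sum_div_sum_le_KL (hμ : ∀ a, 0 ≤ μ a) (hν : ∀ a, 0 ≤ ν a)
    (hμν : ∀ a, ν a = 0 → μ a = 0) :
    (∑ a, μ a) * Real.log ((∑ a, μ a) / ∑ a, ν a) ≤ KL μ ν := by
  rcases (Finset.sum_nonneg fun a _ => hμ a).eq_or_lt with hM | hM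
  · have hμ0 : ∀ a, μ a = 0 := fun a =>
      (Finset.sum_eq_zero_iff_of_nonneg fun a _ => hμ a).mp hM.symm a (Finset.mem_univ a)
    simp [KL, hμ0]
  have hN : 0 < ∑ a, ν a := by
    refine (Finset.sum_nonneg fun a _ => hν a).lt_of_ne fun hN => hM.ne' ?_
    refine Finset.sum_eq_zero fun a _ => hμν a ?_
    exact (Finset.sum_eq_zero_iff_of_nonneg fun a _ => hν a).mp hN.symm a (Finset.mem_univ a)
  have hc : 0 < (∑ a, μ a) / ∑ a, ν a := div_pos hM hN
  have h := sum_sub_sum_le_KL hμ (fun a => mul_nonneg hc.le (hν a))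
    (fun a h => hμν a ((mul_eq_zero.mp h).resolve_left hc.ne'))
  rw [KL_const_mul_right hμν hc.ne', ← Finset.mul_sum, div_mul_cancel₀ _ hN.ne',
    sub_self] at h
  linarith

theorem KL_eq_zero_of_subsingleton [Subsingleton A] (h : ∑ a, μ a = ∑ a, ν a) :
    KL μ ν = 0 := by
  cases isEmpty_or_nonempty A with
  | inl _ => simp [KL]
  | inr hA =>
    obtain ⟨a⟩ := hA
    have : Unique A := uniqueOfSubsingleton a
    rw [Fintype.sum_unique, Fintype.sum_unique] at h
    simp [KL, h]

section Kernel

variable {K : A → B → ℝ}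

theorem KL_sum_mul_le (hK : ∀ a b, 0 ≤ K a b) (hrow : ∀ a, ν a ≠ 0 → ∑ b, K a b = 1)
    (hμ : ∀ a, 0 ≤ μ a) (hν : ∀ a, 0 ≤ ν a) (hμν : ∀ a, ν a = 0 → μ a = 0) :
    KL (fun b => ∑ a, μ a * K a b) (fun b => ∑ a, ν a * K a b) ≤ KL μ ν := by
  calc KL (fun b => ∑ a, μ a * K a b) (fun b => ∑ a, ν a * K a b)
      ≤ ∑ b, KL (fun a => μ a * K a b) (fun a => ν a * K a b) :=
        Finset.sum_le_sum fun b _ => sum_mul_log_sum_div_sum_le_KL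
          (fun a => mul_nonneg (hμ a) (hK a b)) (fun a => mul_nonneg (hν a) (hK a b))
          (fun a h => by rcases mul_eq_zero.mp h with h | h <;> simp [h, hμν a])
    _ = KL μ ν := by
        simp only [KL]
        rw [Finset.sum_comm]
        refine Finset.sum_congr rfl fun a _ => ?_
        by_cases hμa : μ a = 0
        · simp [hμa]
        have hνa : ν a ≠ 0 := fun h => hμa (hμν a h)
        rw [← mul_one (μ a * _), ← hrow a hνa, Finset.mul_sum]
        refine Finset.sum_congr rfl fun b _ => ?_
        by_cases hKb : K a b = 0
        · simp [hKb]
        rw [mul_div_mul_right _ _ hKb]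
        ring

theorem sum_sum_mul (hrow : ∀ a, ν a ≠ 0 → ∑ b, K a b = 1)
    (hμν : ∀ a, ν a = 0 → μ a = 0) :
    ∑ b, ∑ a, μ a * K a b = ∑ a, μ a := by
  rw [Finset.sum_comm]
  refine Finset.sum_congr rfl fun a _ => ?_
  by_cases hμa : μ a = 0
  · simp [hμa]
  rw [← Finset.mul_sum, hrow a fun h => hμa (hμν a h), mul_one]

theorem KL_sum_mul_nonneg (hK : ∀ a b, 0 ≤ K a b) (hrow : ∀ a, ν a ≠ 0 → ∑ b, K a b = 1)
    (hμ : ∀ a, 0 ≤ μ a) (hν : ∀ a, 0 ≤ ν a) (hμν : ∀ a, ν a = 0 → μ a = 0)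
    (hsum : ∑ a, ν a ≤ ∑ a, μ a) :
    0 ≤ KL (fun b => ∑ a, μ a * K a b) (fun b => ∑ a, ν a * K a b) := by
  refine KL_nonneg (fun b => Finset.sum_nonneg fun a _ => mul_nonneg (hμ a) (hK a b))
    (fun b => Finset.sum_nonneg fun a _ => mul_nonneg (hν a) (hK a b)) (fun b h => ?_) ?_
  · refine Finset.sum_eq_zero fun a _ => ?_
    have := (Finset.sum_eq_zero_iff_of_nonneg fun a _ => mul_nonneg (hν a) (hK a b)).mp h a
      (Finset.mem_univ a)
    rcases mul_eq_zero.mp this with h | h <;> simp [h, hμν a]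
  · rwa [sum_sum_mul hrow hμν, sum_sum_mul hrow fun _ => id]

end Kernel

end KL

section Mass

variable {Ω B C : Type*} [Fintype Ω]

def mass (ν : Ω → ℝ) (E : Ω → Prop) : ℝ :=
  ∑ ω, if E ω then ν ω else 0

def law (ν : Ω → ℝ) (f : Ω → B) (b : B) : ℝ :=
  mass ν fun ω => f ω = b

-- `condLaw ν f g b` is identically `0` when `{f = b}` is `ν`-null.
def condLaw (ν : Ω → ℝ) (f : Ω → B) (g : Ω → C) (b : B) (c : C) : ℝ :=
  mass ν (fun ω => f ω = b ∧ g ω = c) / law ν f b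

variable {ν ρ : Ω → ℝ} {E F : Ω → Prop}

theorem mass_congr (h : ∀ ω, E ω ↔ F ω) : mass ν E = mass ν F :=
  congrArg (mass ν) (funext fun ω => propext (h ω))

theorem mass_eq_sum_mul (ν : Ω → ℝ) (E : Ω → Prop) :
    mass ν E = ∑ ω, ν ω * if E ω then 1 else 0 := by
  simp [mass, mul_ite]

theorem mass_eq_and_eq (ν : Ω → ℝ) (E : Ω → Prop) (ω : Ω) :
    mass ν (fun τ => τ = ω ∧ E τ) = if E ω then ν ω else 0 := by
  rw [mass, Finset.sum_eq_single ω (fun τ _ hτ => by simp [hτ]) (by simp)]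
  simp

theorem mass_nonneg (hν : ∀ ω, 0 ≤ ν ω) : 0 ≤ mass ν E :=
  Finset.sum_nonneg fun ω _ => by split_ifs <;> simp [hν ω]

theorem law_nonneg (hν : ∀ ω, 0 ≤ ν ω) (f : Ω → B) (b : B) : 0 ≤ law ν f b :=
  mass_nonneg hν

theorem mass_mono (hν : ∀ ω, 0 ≤ ν ω) (h : ∀ ω, E ω → F ω) :
    mass ν E ≤ mass ν F :=
  Finset.sum_le_sum fun ω _ => by
    by_cases hE : E ω
    · simp [hE, h ω hE]
    · split_ifs <;> simp [hν ω]

theorem mass_pos (hν : ∀ ω, 0 ≤ ν ω) {ω : Ω} (hE : E ω) (hω : 0 < ν ω) :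
    0 < mass ν E :=
  hω.trans_le <| by
    simpa [mass, hE] using Finset.single_le_sum (f := fun ω' => if E ω' then ν ω' else 0)
      (fun ω' _ => by split_ifs <;> simp [hν ω']) (Finset.mem_univ ω)

theorem mass_eq_zero_of_mass_eq_zero (hρ : ∀ ω, 0 ≤ ρ ω) (hνρ : ∀ ω, ρ ω = 0 → ν ω = 0)
    (h : mass ρ E = 0) : mass ν E = 0 :=
  Finset.sum_eq_zero fun ω _ => by
    by_cases hE : E ω
    · rw [if_pos hE]
      by_contra hν
      exact (mass_pos hρ hE ((hρ ω).lt_of_ne fun h0 => hν (hνρ ω h0.symm))).ne' h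
    · rw [if_neg hE]

theorem mass_pos_of_mass_pos (hρ : ∀ ω, 0 ≤ ρ ω) (hνρ : ∀ ω, ρ ω = 0 → ν ω = 0)
    (h : 0 < mass ν E) : 0 < mass ρ E :=
  (mass_nonneg hρ).lt_of_ne fun h0 => h.ne' (mass_eq_zero_of_mass_eq_zero hρ hνρ h0.symm)

theorem mass_eq_mass_mul {c : ℝ} (h : ∀ ω, E ω → ν ω = ρ ω * c) :
    mass ν E = mass ρ E * c := by
  simp only [mass, Finset.sum_mul]
  exact Finset.sum_congr rfl fun ω _ => by by_cases hE : E ω <;> simp [hE, h]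

theorem sum_mass_and [Fintype B] (E : Ω → Prop) (f : Ω → B) :
    ∑ b, mass ν (fun ω => E ω ∧ f ω = b) = mass ν E := by
  simp only [mass]
  rw [Finset.sum_comm]
  refine Finset.sum_congr rfl fun ω _ => ?_
  by_cases hE : E ω <;> simp [hE, Finset.sum_ite_eq]

theorem sum_law [Fintype B] (f : Ω → B) : ∑ b, law ν f b = ∑ ω, ν ω := by
  simpa [law, mass] using sum_mass_and (ν := ν) (fun _ => True) f

theorem sum_law_mul [Fintype B] (f : Ω → B) (G : B → ℝ) :
    ∑ b, law ν f b * G b = ∑ ω, ν ω * G (f ω) := by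
  simp only [law, mass, Finset.sum_mul, ite_mul, zero_mul]
  rw [Finset.sum_comm]
  exact Finset.sum_congr rfl fun ω _ => by simp [Finset.sum_ite_eq]

theorem sum_sum_mass_mul [Fintype B] [Fintype C] (f : Ω → B) (g : Ω → C)
    (G : B → C → ℝ) :
    ∑ b, ∑ c, mass ν (fun ω => f ω = b ∧ g ω = c) * G b c =
      ∑ ω, ν ω * G (f ω) (g ω) := by
  rw [← sum_law_mul (fun ω => (f ω, g ω)) fun x => G x.1 x.2, Fintype.sum_prod_type]
  simp only [law, Prod.mk.injEq]

theorem distOn_condLaw [Fintype C] (hν : ∀ ω, 0 ≤ ν ω) (hρ : ∀ ω, 0 ≤ ρ ω)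
    (hνρ : ∀ ω, ρ ω = 0 → ν ω = 0) {f : Ω → B} {g : Ω → C} {b : B}
    (hb : 0 < law ν f b) :
    distOn (fun c => 0 < mass ρ fun ω => f ω = b ∧ g ω = c) (condLaw ν f g b) := by
  refine ⟨fun c => div_nonneg (mass_nonneg hν) hb.le, ?_, fun c hc => ?_⟩
  · simp only [condLaw, ← Finset.sum_div, sum_mass_and]
    exact div_self hb.ne'
  · rw [condLaw, mass_eq_zero_of_mass_eq_zero hρ hνρ
      ((not_lt.mp hc).antisymm (mass_nonneg hρ)), zero_div]

end Mass

section LawKL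

variable {Ω B C D : Type*} [Fintype Ω]
variable {ν ρ : Ω → ℝ}

theorem KL_law_eq_sum [Fintype B] (f : Ω → B) :
    KL (law ν f) (law ρ f) = ∑ ω, ν ω * Real.log (law ν f (f ω) / law ρ f (f ω)) :=
  sum_law_mul f _

theorem KL_law_le [Fintype B] (hν : ∀ ω, 0 ≤ ν ω) (hρ : ∀ ω, 0 ≤ ρ ω)
    (hνρ : ∀ ω, ρ ω = 0 → ν ω = 0) (f : Ω → B) : KL (law ν f) (law ρ f) ≤ KL ν ρ := by
  have hlaw : ∀ μ : Ω → ℝ, law μ f = fun b => ∑ ω, μ ω * if f ω = b then 1 else 0 :=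
    fun μ => funext fun b => mass_eq_sum_mul μ _
  rw [hlaw, hlaw]
  exact KL_sum_mul_le (fun _ _ => by split_ifs <;> norm_num)
    (fun ω _ => by simp [Finset.sum_ite_eq]) hν hρ hνρ

theorem KL_law_eq_add_sum [Fintype B] [Fintype C] [Fintype D] (hν : ∀ ω, 0 ≤ ν ω)
    (hρ : ∀ ω, 0 ≤ ρ ω) (hνρ : ∀ ω, ρ ω = 0 → ν ω = 0) (f : Ω → B) (g : Ω → C) (h : Ω → D)
    (hfg : ∀ ω ω', h ω = h ω' ↔ f ω = f ω' ∧ g ω = g ω') :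
    KL (law ν h) (law ρ h) = KL (law ν f) (law ρ f) +
      ∑ b, law ν f b * KL (condLaw ν f g b) (condLaw ρ f g b) := by
  have hcond : ∑ b, law ν f b * KL (condLaw ν f g b) (condLaw ρ f g b) =
      ∑ ω, ν ω * Real.log (condLaw ν f g (f ω) (g ω) / condLaw ρ f g (f ω) (g ω)) := by
    rw [← sum_sum_mass_mul f g fun b c => Real.log (condLaw ν f g b c / condLaw ρ f g b c)]
    refine Finset.sum_congr rfl fun b _ => ?_
    rw [KL, Finset.mul_sum]
    refine Finset.sum_congr rfl fun c _ => ?_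
    rw [← mul_assoc, condLaw]
    by_cases hb : law ν f b = 0
    · have : mass ν (fun ω => f ω = b ∧ g ω = c) = 0 :=
        le_antisymm (hb ▸ mass_mono hν fun ω h => h.1) (mass_nonneg hν)
      simp [hb, this]
    · rw [mul_div_cancel₀ _ hb]
  rw [KL_law_eq_sum, KL_law_eq_sum, hcond, ← Finset.sum_add_distrib]
  refine Finset.sum_congr rfl fun ω _ => ?_
  rcases (hν ω).eq_or_lt with h0 | hpos
  · simp [← h0]
  have hρω : 0 < ρ ω := (hρ ω).lt_of_ne fun h0 => hpos.ne' (hνρ ω h0.symm)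
  have hfib : ∀ μ : Ω → ℝ, law μ h (h ω) = mass μ fun ω' => f ω' = f ω ∧ g ω' = g ω :=
    fun μ => mass_congr fun ω' => hfg ω' ω
  have h1 : 0 < mass ν fun ω' => f ω' = f ω ∧ g ω' = g ω := mass_pos hν ⟨rfl, rfl⟩ hpos
  have h2 : 0 < mass ρ fun ω' => f ω' = f ω ∧ g ω' = g ω := mass_pos hρ ⟨rfl, rfl⟩ hρω
  have h3 : 0 < law ν f (f ω) := mass_pos hν rfl hpos
  have h4 : 0 < law ρ f (f ω) := mass_pos hρ rfl hρω
  rw [hfib, hfib, condLaw, condLaw, div_div_div_comm, ← mul_add,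
    Real.log_div (div_pos h1 h2).ne' (div_pos h3 h4).ne']
  ring

end LawKL

section Resample

variable {Ω B C : Type*} [Fintype Ω]
variable {ν ρ : Ω → ℝ}

/-- The heat-bath update: keep the law of `f` under `ν` and redraw the rest from `ρ` given `f`. -/
def resample (ρ : Ω → ℝ) (f : Ω → B) (ν : Ω → ℝ) (ω : Ω) : ℝ :=
  ρ ω * (law ν f (f ω) / law ρ f (f ω))

theorem resample_nonneg (hν : ∀ ω, 0 ≤ ν ω) (hρ : ∀ ω, 0 ≤ ρ ω) (f : Ω → B) (ω : Ω) :
    0 ≤ resample ρ f ν ω :=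
  mul_nonneg (hρ ω) (div_nonneg (mass_nonneg hν) (mass_nonneg hρ))

theorem resample_eq_zero (f : Ω → B) {ω : Ω} (h : ρ ω = 0) : resample ρ f ν ω = 0 := by
  simp [resample, h]

theorem sum_resample_mul [Fintype B] (hρ : ∀ ω, 0 ≤ ρ ω)
    (hνρ : ∀ ω, ρ ω = 0 → ν ω = 0) (f : Ω → B) (G : B → ℝ) :
    ∑ ω, resample ρ f ν ω * G (f ω) = ∑ ω, ν ω * G (f ω) := by
  simp only [resample, mul_assoc]
  rw [← sum_law_mul f fun b => law ν f b / law ρ f b * G b, ← sum_law_mul f]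
  refine Finset.sum_congr rfl fun b _ => ?_
  by_cases hb : law ρ f b = 0
  · rw [hb, show law ν f b = 0 from mass_eq_zero_of_mass_eq_zero hρ hνρ hb]
    simp
  · rw [← mul_assoc, mul_div_cancel₀ _ hb]

theorem law_resample_comp [Fintype B] (hρ : ∀ ω, 0 ≤ ρ ω)
    (hνρ : ∀ ω, ρ ω = 0 → ν ω = 0) (f : Ω → B) (φ : B → C) :
    law (resample ρ f ν) (φ ∘ f) = law ν (φ ∘ f) :=
  funext fun c => by
    simp only [law, mass_eq_sum_mul]
    exact sum_resample_mul hρ hνρ f fun b => if φ b = c then 1 else 0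

theorem KL_resample [Fintype B] (hρ : ∀ ω, 0 ≤ ρ ω) (hνρ : ∀ ω, ρ ω = 0 → ν ω = 0)
    (f : Ω → B) : KL (resample ρ f ν) ρ = KL (law ν f) (law ρ f) := by
  rw [KL_law_eq_sum, ← sum_resample_mul hρ hνρ f fun b => Real.log (law ν f b / law ρ f b),
    KL]
  refine Finset.sum_congr rfl fun ω _ => ?_
  by_cases hω : ρ ω = 0
  · simp [resample_eq_zero f hω]
  · rw [resample, mul_div_cancel_left₀ _ hω]

theorem mass_resample_and (f : Ω → B) {A' B' C' : Type*} [Fintype B'] (a : Ω → A')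
    (b : Ω → B') (c : Ω → C') (hab : ∀ ω ω', f ω = f ω' ↔ a ω = a ω' ∧ b ω = b ω')
    (α : A') (γ : C') :
    mass (resample ρ f ν) (fun ω => a ω = α ∧ c ω = γ) =
      ∑ β, mass ν (fun ω => a ω = α ∧ b ω = β) *
        (mass ρ (fun ω => a ω = α ∧ b ω = β ∧ c ω = γ) /
          mass ρ (fun ω => a ω = α ∧ b ω = β)) := by
  rw [← sum_mass_and _ b]
  refine Finset.sum_congr rfl fun β _ => ?_
  have hfib : ∀ μ : Ω → ℝ, ∀ ω, a ω = α → b ω = β →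
      law μ f (f ω) = mass μ fun ω' => a ω' = α ∧ b ω' = β := fun μ ω ha hb =>
    mass_congr fun ω' => by rw [hab, ha, hb]
  have hreorder : mass ρ (fun ω => (a ω = α ∧ c ω = γ) ∧ b ω = β) =
      mass ρ fun ω => a ω = α ∧ b ω = β ∧ c ω = γ := mass_congr fun ω => by tauto
  rw [mass_eq_mass_mul (ρ := ρ) fun ω h => by
      rw [resample, hfib ν ω h.1.1 h.2, hfib ρ ω h.1.1 h.2], hreorder]
  ring

end Resample

variable {n : ℕ} {U : Fin n → Type*}

theorem restr_eq_restr_iff {S : Finset (Fin n)} {ω ω' : ∀ i, U i} :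
    restr S ω = restr S ω' ↔ ∀ k ∈ S, ω k = ω' k := by
  simp [restr, funext_iff]

theorem restr_eq_restr_iff_of_eq_union {S A B : Finset (Fin n)} (h : S = A ∪ B)
    (ω ω' : ∀ i, U i) :
    restr S ω = restr S ω' ↔ restr A ω = restr A ω' ∧ restr B ω = restr B ω' := by
  simp only [restr_eq_restr_iff, h, Finset.mem_union, or_imp, forall_and]

section Coordinates

def updated (s : Equiv.Perm (Fin n)) (j : ℕ) : Finset (Fin n) :=
  univ.filter fun k => (s.symm k : ℕ) < j

def pending (s : Equiv.Perm (Fin n)) (j : Fin n) : Finset (Fin n) :=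
  (univ.filter fun k => j < k).image fun k => s k

variable {s : Equiv.Perm (Fin n)}

theorem mem_updated {j : ℕ} {k : Fin n} : k ∈ updated s j ↔ (s.symm k : ℕ) < j := by
  simp [updated]

theorem mem_pending {j k : Fin n} : k ∈ pending s j ↔ j < s.symm k := by
  simp only [pending, Finset.mem_image, Finset.mem_filter, Finset.mem_univ, true_and]
  exact ⟨fun ⟨l, hl, hk⟩ => by rwa [← hk, Equiv.symm_apply_apply],
    fun h => ⟨_, h, s.apply_symm_apply k⟩⟩

theorem self_notMem_pending (j : Fin n) : s j ∉ pending s j := by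
  simp [mem_pending]

theorem updated_zero : updated s 0 = ∅ := by
  ext k
  simp [mem_updated]

theorem updated_eq_compl (j : Fin n) : updated s j = (pending s j ∪ {s j})ᶜ := by
  ext k
  simp only [mem_updated, Finset.mem_compl, Finset.mem_union, mem_pending, Finset.mem_singleton,
    ← Equiv.symm_apply_eq (e := s), not_or, not_lt, Fin.le_iff_val_le_val, Fin.ext_iff]
  omega

theorem updated_succ (j : Fin n) : updated s (j + 1) = updated s j ∪ {s j} := by
  ext k
  simp only [mem_updated, Finset.mem_union, Finset.mem_singleton, ← Equiv.symm_apply_eq (e := s),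
    Fin.ext_iff]
  omega

theorem updated_eq_compl_singleton {m : ℕ} (s : Equiv.Perm (Fin (m + 1))) :
    updated s m = {s (Fin.last m)}ᶜ := by
  ext k
  simp only [mem_updated, Finset.mem_compl, Finset.mem_singleton, ← Equiv.symm_apply_eq (e := s),
    Fin.ext_iff, Fin.val_last]
  omega

theorem compl_singleton_eq_union {i : Fin n} {F P : Finset (Fin n)} (hiF : i ∉ F)
    (hP : P = (F ∪ {i})ᶜ) : ({i}ᶜ : Finset (Fin n)) = P ∪ F := by
  ext k
  by_cases hk : k = i
  · simp [hP, hk, hiF]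
  · by_cases hkF : k ∈ F <;> simp [hP, hk, hkF]

theorem prod_filter_val_lt_succ {M : Type*} [CommMonoid M] (f : Fin n → M) (j : Fin n) :
    ∏ k ∈ univ.filter (fun k : Fin n => (k : ℕ) < j + 1), f k =
      f j * ∏ k ∈ univ.filter (fun k : Fin n => (k : ℕ) < j), f k := by
  rw [← Finset.prod_insert (by simp)]
  congr 1
  ext k
  simp [Fin.ext_iff]
  omega

end Coordinates

section WPC

variable [∀ i, Fintype (U i)] [∀ i, DecidableEq (U i)]

section ColoredWalk

variable (X : WPC n U)

theorem pr_eq_mass (E : (∀ i, U i) → Prop) : pr X E = mass X.π E := rfl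

variable {X} {S I J : Finset (Fin n)} {α : PAssign U S}

theorem cmarg_nonneg {T : Finset (Fin n)} (β : PAssign U T) : 0 ≤ cmarg X α β :=
  div_nonneg (mass_nonneg X.nonneg) (mass_nonneg X.nonneg)

theorem Cwalk_nonneg (τI : PAssign U I) (τJ : PAssign U J) : 0 ≤ Cwalk X S I J α τI τJ :=
  div_nonneg (mass_nonneg X.nonneg) (mass_nonneg X.nonneg)

theorem sum_cmarg (hα : 0 < marg X S α) (T : Finset (Fin n)) :
    ∑ β : PAssign U T, cmarg X α β = 1 := by
  simp only [cmarg, ← Finset.sum_div, pr_eq_mass, sum_mass_and]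
  exact div_self hα.ne'

theorem sum_Cwalk {τI : PAssign U I} (h : cmarg X α τI ≠ 0) :
    ∑ τJ : PAssign U J, Cwalk X S I J α τI τJ = 1 := by
  have hI : pr X (fun ω => restr S ω = α ∧ restr I ω = τI) ≠ 0 := fun h0 =>
    h (by rw [cmarg, h0, zero_div])
  simp only [Cwalk, ← Finset.sum_div, pr_eq_mass, ← and_assoc, sum_mass_and]
  exact div_self hI

theorem sum_cmarg_mul_Cwalk (τJ : PAssign U J) :
    ∑ τI : PAssign U I, cmarg X α τI * Cwalk X S I J α τI τJ = cmarg X α τJ := by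
  have key : ∀ τI : PAssign U I, cmarg X α τI * Cwalk X S I J α τI τJ =
      pr X (fun ω => (restr S ω = α ∧ restr J ω = τJ) ∧ restr I ω = τI) / marg X S α := by
    intro τI
    rw [pr_congr X fun ω =>
      show _ ↔ restr S ω = α ∧ restr I ω = τI ∧ restr J ω = τJ by tauto, cmarg, Cwalk]
    by_cases h0 : pr X (fun ω => restr S ω = α ∧ restr I ω = τI) = 0
    · have : pr X (fun ω => restr S ω = α ∧ restr I ω = τI ∧ restr J ω = τJ) = 0 :=
        le_antisymm (h0 ▸ mass_mono X.nonneg fun ω h => ⟨h.1, h.2.1⟩) (mass_nonneg X.nonneg)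
      simp [h0, this]
    · rw [div_mul_div_comm, mul_comm, mul_div_mul_right _ _ h0]
  simp only [key, ← Finset.sum_div, pr_eq_mass, sum_mass_and]
  rfl

variable {μ : PAssign U I → ℝ}

theorem eq_zero_of_cmarg_eq_zero (hα : 0 < marg X S α)
    (hμ : distOn (fun τ => 0 < pr X fun ω => restr S ω = α ∧ restr I ω = τ) μ)
    {τ : PAssign U I} (h : cmarg X α τ = 0) : μ τ = 0 :=
  hμ.2.2 τ fun hpos => (div_pos hpos hα).ne' h

theorem KL_cmarg_nonneg (hα : 0 < marg X S α)
    (hμ : distOn (fun τ => 0 < pr X fun ω => restr S ω = α ∧ restr I ω = τ) μ) :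
    0 ≤ KL μ (cmarg X α) :=
  KL_nonneg hμ.1 cmarg_nonneg (fun _ => eq_zero_of_cmarg_eq_zero hα hμ)
    (by rw [sum_cmarg hα, hμ.2.1])

theorem KL_Cwalk_nonneg (hα : 0 < marg X S α)
    (hμ : distOn (fun τ => 0 < pr X fun ω => restr S ω = α ∧ restr I ω = τ) μ) :
    0 ≤ KL (fun τJ : PAssign U J => ∑ τI, μ τI * Cwalk X S I J α τI τJ) (cmarg X α) := by
  have := KL_sum_mul_nonneg (K := Cwalk X S I J α) (fun _ _ => Cwalk_nonneg _ _)
    (fun _ => sum_Cwalk) hμ.1 cmarg_nonneg (fun _ => eq_zero_of_cmarg_eq_zero hα hμ)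
    (by rw [sum_cmarg hα, hμ.2.1])
  simpa only [sum_cmarg_mul_Cwalk] using this

theorem KL_Cwalk_le (hα : 0 < marg X S α)
    (hμ : distOn (fun τ => 0 < pr X fun ω => restr S ω = α ∧ restr I ω = τ) μ) :
    KL (fun τJ : PAssign U J => ∑ τI, μ τI * Cwalk X S I J α τI τJ) (cmarg X α) ≤
      KL μ (cmarg X α) := by
  have := KL_sum_mul_le (K := Cwalk X S I J α) (fun _ _ => Cwalk_nonneg _ _)
    (fun _ => sum_Cwalk) hμ.1 cmarg_nonneg (fun _ => eq_zero_of_cmarg_eq_zero hα hμ)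
  simpa only [sum_cmarg_mul_Cwalk] using this

end ColoredWalk

section Eta

variable {X : WPC n U} {I J : Finset (Fin n)}

theorem KL_Cwalk_div_KL_le_one {α : PAssign U (I ∪ J)ᶜ} {μ : PAssign U I → ℝ}
    (hα : 0 < marg X (I ∪ J)ᶜ α)
    (hμ : distOn (fun τ => 0 < pr X fun ω => restr (I ∪ J)ᶜ ω = α ∧ restr I ω = τ) μ) :
    KL (fun τJ : PAssign U J => ∑ τI, μ τI * Cwalk X (I ∪ J)ᶜ I J α τI τJ) (cmarg X α) /
      KL μ (cmarg X α) ≤ 1 :=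
  div_le_one_of_le₀ (KL_Cwalk_le hα hμ) (KL_cmarg_nonneg hα hμ)

theorem etaIJ_nonneg : 0 ≤ etaIJ X I J := by
  rw [etaIJ, sub_nonneg]
  refine Real.sSup_le ?_ zero_le_one
  rintro r ⟨α, hα, μ, hμ, -, rfl⟩
  exact KL_Cwalk_div_KL_le_one hα hμ

theorem etaIJ_le_one : etaIJ X I J ≤ 1 := by
  rw [etaIJ, sub_le_self_iff]
  refine Real.sSup_nonneg ?_
  rintro r ⟨α, hα, μ, hμ, -, rfl⟩
  exact div_nonneg (KL_Cwalk_nonneg hα hμ) (KL_cmarg_nonneg hα hμ)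

theorem KL_Cwalk_le_etaIJ {S : Finset (Fin n)} (hS : S = (I ∪ J)ᶜ) {α : PAssign U S}
    (hα : 0 < marg X S α) {μ : PAssign U I → ℝ}
    (hμ : distOn (fun τ => 0 < pr X fun ω => restr S ω = α ∧ restr I ω = τ) μ) :
    KL (fun τJ : PAssign U J => ∑ τI, μ τI * Cwalk X S I J α τI τJ) (cmarg X α) ≤
      (1 - etaIJ X I J) * KL μ (cmarg X α) := by
  subst hS
  rcases (KL_cmarg_nonneg hα hμ).eq_or_lt with h0 | hpos
  · rw [← h0, mul_zero]
    exact (KL_Cwalk_le hα hμ).trans h0.ge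
  rw [etaIJ, sub_sub_cancel, ← div_le_iff₀ hpos]
  refine le_csSup ⟨1, ?_⟩ ⟨α, hα, μ, hμ, hpos.ne', rfl⟩
  rintro r ⟨α, hα, μ, hμ, -, rfl⟩
  exact KL_Cwalk_div_KL_le_one hα hμ

end Eta

section UpdateOperator

variable {X : WPC n U} {ν : (∀ i, U i) → ℝ} {i : Fin n}

variable (X) in
theorem vecMul_Qmat (ν : (∀ i, U i) → ℝ) (i : Fin n) :
    Matrix.vecMul ν (Qmat X i) = resample X.π (restr {i}ᶜ) ν := by
  funext ω
  have hterm : ∀ ω', ν ω' * Qmat X i ω' ω =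
      (if restr {i}ᶜ ω' = restr {i}ᶜ ω then ν ω' else 0) *
        (X.π ω / law X.π (restr {i}ᶜ) (restr {i}ᶜ ω)) := by
    intro ω'
    rw [Qmat, Matrix.of_apply, pr_eq_mass, mass_eq_and_eq]
    by_cases h : restr {i}ᶜ ω' = restr {i}ᶜ ω
    · rw [if_pos h.symm, if_pos h, h]
      rfl
    · rw [if_neg (Ne.symm h), if_neg h]
      simp
  simp only [Matrix.vecMul, dotProduct, hterm, ← Finset.sum_mul]
  rw [resample, mul_div_assoc', mul_comm, ← mul_div_assoc]
  -- the two sums differ only in their `Decidable` instances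
  congr 2
  exact Finset.sum_congr rfl fun _ _ => by congr

theorem vecMul_Qmat_nonneg (hν : ∀ ω, 0 ≤ ν ω) (ω : ∀ i, U i) :
    0 ≤ Matrix.vecMul ν (Qmat X i) ω := by
  rw [vecMul_Qmat]
  exact resample_nonneg hν X.nonneg _ ω

theorem vecMul_Qmat_eq_zero {ω : ∀ i, U i} (h : X.π ω = 0) :
    Matrix.vecMul ν (Qmat X i) ω = 0 := by
  rw [vecMul_Qmat]
  exact resample_eq_zero _ h

theorem KL_vecMul_Qmat (hνπ : ∀ ω, X.π ω = 0 → ν ω = 0) :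
    KL (Matrix.vecMul ν (Qmat X i)) X.π =
      KL (law ν (restr {i}ᶜ)) (law X.π (restr {i}ᶜ)) := by
  rw [vecMul_Qmat, KL_resample X.nonneg hνπ]

theorem KL_vecMul_Qmat_le (hν : ∀ ω, 0 ≤ ν ω) (hνπ : ∀ ω, X.π ω = 0 → ν ω = 0) :
    KL (Matrix.vecMul ν (Qmat X i)) X.π ≤ KL ν X.π :=
  (KL_vecMul_Qmat hνπ).trans_le (KL_law_le hν X.nonneg hνπ _)

theorem law_vecMul_Qmat (hνπ : ∀ ω, X.π ω = 0 → ν ω = 0) {P : Finset (Fin n)}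
    (hiP : i ∉ P) : law (Matrix.vecMul ν (Qmat X i)) (restr P) = law ν (restr P) := by
  have hPi : P ⊆ {i}ᶜ := fun k hk =>
    Finset.mem_compl.2 fun h => hiP (Finset.mem_singleton.1 h ▸ hk)
  rw [vecMul_Qmat]
  exact law_resample_comp X.nonneg hνπ (restr {i}ᶜ)
    fun b (k : {x // x ∈ P}) => b ⟨k.1, hPi k.2⟩

theorem condLaw_vecMul_Qmat (hνπ : ∀ ω, X.π ω = 0 → ν ω = 0) {P F : Finset (Fin n)}
    (hPF : ({i}ᶜ : Finset (Fin n)) = P ∪ F) (α : PAssign U P) :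
    condLaw (Matrix.vecMul ν (Qmat X i)) (restr P) (restr {i}) α =
      fun τ => ∑ τF, condLaw ν (restr P) (restr F) α τF * Cwalk X P F {i} α τF τ := by
  have hiP : i ∉ P := fun h => by simpa using hPF.ge (Finset.mem_union_left F h)
  funext τ
  rw [condLaw, law_vecMul_Qmat hνπ hiP, vecMul_Qmat,
    mass_resample_and _ _ _ _ (restr_eq_restr_iff_of_eq_union hPF), Finset.sum_div]
  exact Finset.sum_congr rfl fun τF _ => mul_div_right_comm _ _ _

theorem KL_law_vecMul_Qmat_le_etaIJ (hν : ∀ ω, 0 ≤ ν ω) (hνπ : ∀ ω, X.π ω = 0 → ν ω = 0)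
    {F P P' : Finset (Fin n)} (hiF : i ∉ F) (hP : P = (F ∪ {i})ᶜ) (hP' : P' = P ∪ {i}) :
    KL (law (Matrix.vecMul ν (Qmat X i)) (restr P')) (law X.π (restr P')) ≤
      etaIJ X F {i} * KL (law ν (restr P)) (law X.π (restr P)) +
        (1 - etaIJ X F {i}) * KL (Matrix.vecMul ν (Qmat X i)) X.π := by
  have hPF := compl_singleton_eq_union hiF hP
  have hD : KL (Matrix.vecMul ν (Qmat X i)) X.π = KL (law ν (restr P)) (law X.π (restr P)) +
      ∑ α, law ν (restr P) α * KL (condLaw ν (restr P) (restr F) α) (cmarg X α) := by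
    rw [KL_vecMul_Qmat hνπ,
      KL_law_eq_add_sum hν X.nonneg hνπ _ _ _ (restr_eq_restr_iff_of_eq_union hPF)]
    rfl
  have hA : KL (law (Matrix.vecMul ν (Qmat X i)) (restr P')) (law X.π (restr P')) =
      KL (law ν (restr P)) (law X.π (restr P)) + ∑ α, law ν (restr P) α *
        KL (condLaw (Matrix.vecMul ν (Qmat X i)) (restr P) (restr {i}) α) (cmarg X α) := by
    rw [KL_law_eq_add_sum (vecMul_Qmat_nonneg hν) X.nonneg (fun _ => vecMul_Qmat_eq_zero)
      _ _ _ (restr_eq_restr_iff_of_eq_union hP'), law_vecMul_Qmat hνπ (by simp [hP])]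
    rfl
  have hterm : ∀ α, law ν (restr P) α *
      KL (condLaw (Matrix.vecMul ν (Qmat X i)) (restr P) (restr {i}) α) (cmarg X α) ≤
      (1 - etaIJ X F {i}) *
        (law ν (restr P) α * KL (condLaw ν (restr P) (restr F) α) (cmarg X α)) := by
    intro α
    rcases (law_nonneg hν (restr P) α).eq_or_lt with h0 | hpos
    · rw [← h0, zero_mul, zero_mul, mul_zero]
    rw [condLaw_vecMul_Qmat hνπ hPF, mul_left_comm]
    exact mul_le_mul_of_nonneg_left (KL_Cwalk_le_etaIJ hP (mass_pos_of_mass_pos X.nonneg hνπ hpos)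
      (distOn_condLaw hν X.nonneg hνπ hpos)) hpos.le
  have hsum := Finset.sum_le_sum (s := Finset.univ) fun α _ => hterm α
  rw [← Finset.mul_sum] at hsum
  rw [hA, hD]
  linarith

end UpdateOperator

section Sweep

variable {X : WPC n U} {s : Equiv.Perm (Fin n)} {μ : (∀ i, U i) → ℝ}

theorem eq_zero_of_distOn (hμ : distOn (· ∈ X.Ω) μ) {ω : ∀ i, U i} (h : X.π ω = 0) :
    μ ω = 0 :=
  hμ.2.2 ω fun hω => ((X.support ω).2 hω).ne' h

theorem KL_nonneg_of_distOn (hμ : distOn (· ∈ X.Ω) μ) : 0 ≤ KL μ X.π :=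
  KL_nonneg hμ.1 X.nonneg (fun _ => eq_zero_of_distOn hμ) (by rw [hμ.2.1, X.sum_one])

variable (X s μ) in
def sweep (j : ℕ) : (∀ i, U i) → ℝ :=
  Matrix.vecMul μ ((List.ofFn fun k : Fin n => Qmat X (s k)).take j).prod

theorem sweep_zero : sweep X s μ 0 = μ := by
  simp [sweep]

theorem sweep_succ {j : ℕ} (hj : j < n) :
    sweep X s μ (j + 1) = Matrix.vecMul (sweep X s μ j) (Qmat X (s ⟨j, hj⟩)) := by
  simp [sweep, List.take_add_one, hj, Matrix.vecMul_vecMul]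

theorem sweep_length : sweep X s μ n = Matrix.vecMul μ (Psq X s) := by
  rw [sweep, List.take_of_length_le (by simp), Psq]

theorem sweep_nonneg (hμ : distOn (· ∈ X.Ω) μ) {j : ℕ} (hj : j ≤ n) (ω : ∀ i, U i) :
    0 ≤ sweep X s μ j ω := by
  induction j generalizing ω with
  | zero => rw [sweep_zero]; exact hμ.1 ω
  | succ j ih =>
    rw [sweep_succ hj]
    exact vecMul_Qmat_nonneg (ih (by omega)) ω

theorem sweep_eq_zero (hμ : distOn (· ∈ X.Ω) μ) {j : ℕ} (hj : j ≤ n) {ω : ∀ i, U i}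
    (h : X.π ω = 0) : sweep X s μ j ω = 0 := by
  cases j with
  | zero => rw [sweep_zero]; exact eq_zero_of_distOn hμ h
  | succ j =>
    rw [sweep_succ hj]
    exact vecMul_Qmat_eq_zero h

theorem KL_sweep_le (hμ : distOn (· ∈ X.Ω) μ) {j : ℕ} (hj : j ≤ n) :
    KL (sweep X s μ j) X.π ≤ KL μ X.π := by
  induction j with
  | zero => rw [sweep_zero]
  | succ j ih =>
    rw [sweep_succ hj]
    exact (KL_vecMul_Qmat_le (sweep_nonneg hμ (by omega))
      fun _ => sweep_eq_zero hμ (by omega)).trans (ih (by omega))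

end Sweep

section Main

variable {X : WPC n U} {s : Equiv.Perm (Fin n)} {μ : (∀ i, U i) → ℝ}

theorem KL_law_sweep_updated_le (hμ : distOn (· ∈ X.Ω) μ) {m : ℕ} (hm : m ≤ n) :
    KL (law (sweep X s μ m) (restr (updated s m))) (law X.π (restr (updated s m))) ≤
      (1 - ∏ j ∈ univ.filter (fun j : Fin n => (j : ℕ) < m), etaIJ X (pending s j) {s j}) *
        KL μ X.π := by
  induction m with
  | zero =>
    have : Subsingleton (PAssign U (updated s 0)) :=
      ⟨fun a b => funext fun k => absurd k.2 (by simp [updated_zero])⟩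
    rw [KL_eq_zero_of_subsingleton (by rw [sum_law, sum_law, sweep_zero, hμ.2.1, X.sum_one])]
    simp
  | succ m ih =>
    set j : Fin n := ⟨m, hm⟩
    have hstep := KL_law_vecMul_Qmat_le_etaIJ (sweep_nonneg (s := s) (j := m) hμ (by omega))
      (fun _ => sweep_eq_zero hμ (by omega)) (self_notMem_pending (s := s) j) (updated_eq_compl j)
      (updated_succ j)
    rw [← sweep_succ hm] at hstep
    have hη₀ : 0 ≤ etaIJ X (pending s j) {s j} := etaIJ_nonneg
    have hη₁ : etaIJ X (pending s j) {s j} ≤ 1 := etaIJ_le_one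
    have h1 := mul_le_mul_of_nonneg_left (ih (by omega)) hη₀
    have h2 := mul_le_mul_of_nonneg_left (KL_sweep_le (s := s) hμ hm) (sub_nonneg.2 hη₁)
    rw [prod_filter_val_lt_succ _ j]
    linarith

theorem KL_vecMul_Psq_le (hμ : distOn (· ∈ X.Ω) μ) :
    KL (Matrix.vecMul μ (Psq X s)) X.π ≤
      (1 - ∏ j ∈ univ.filter (fun j : Fin n => (j : ℕ) < n - 1),
        etaIJ X (pending s j) {s j}) * KL μ X.π := by
  cases n with
  | zero =>
    have hKL : KL μ X.π = 0 := KL_eq_zero_of_subsingleton (by rw [hμ.2.1, X.sum_one])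
    simp [Psq, hKL]
  | succ m =>
    have hlast := KL_law_sweep_updated_le (s := s) hμ m.le_succ
    rw [Nat.add_sub_cancel, ← sweep_length, sweep_succ m.lt_succ_self,
      KL_vecMul_Qmat fun _ => sweep_eq_zero hμ m.le_succ]
    rwa [updated_eq_compl_singleton] at hlast

end Main

end WPC

end PaperFormal

namespace PaperFormal

variable {n : ℕ} {U : Fin n → Type*} [∀ i, Fintype (U i)] [∀ i, DecidableEq (U i)]

theorem entropy_contraction_seq_sweep
    (X : WPC n U) (s : Equiv.Perm (Fin n)) :
    EC X (Psq X s) ≥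
      (∏ j ∈ Finset.univ.filter (fun j : Fin n => (j : ℕ) < n - 1),
        etaIJ X ((Finset.univ.filter fun k : Fin n => j < k).image fun k => s k) {s j}) ∧
    ∀ μ : (∀ i, U i) → ℝ, distOn (fun ω => ω ∈ X.Ω) μ →
      KL (Matrix.vecMul μ (Psq X s)) X.π ≤
        (1 - ∏ j ∈ Finset.univ.filter (fun j : Fin n => (j : ℕ) < n - 1),
          etaIJ X ((Finset.univ.filter fun k : Fin n => j < k).image fun k => s k) {s j}) *
          KL μ X.π := by
  refine ⟨?_, fun μ hμ => KL_vecMul_Psq_le hμ⟩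
  rw [EC, ge_iff_le, le_sub_comm]
  refine Real.sSup_le ?_ (sub_nonneg.2 (Finset.prod_le_one (fun _ _ => etaIJ_nonneg)
    fun _ _ => etaIJ_le_one))
  rintro r ⟨μ, hμ, hKL, rfl⟩
  rw [div_le_iff₀ ((KL_nonneg_of_distOn hμ).lt_of_ne' hKL)]
  exact KL_vecMul_Psq_le hμ

end PaperFormal
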